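/- Let C ≥ 1 and let α_1, …, α_C, α_cs > 0 with α_0 = α_cs + Σ_{k=1}^C α_k. Then the Dirichlet expectation of the ambiguity, E(amb(q)) for q ~ Dir(α_1, …, α_C, α_cs), equals 1 − [α_0 (α_0 − α_cs + 1)]^{−1} Σ_{k=1}^C α_k (α_k + 1). Concretely, the integral over {x ∈ ℝ^C : x_i > 0, Σ_{i=1}^C x_i < 1}, with respect to C-dimensional Lebesgue measure and with q_k = x_k for k = 1,…,C and q_cs = 1 − Σ_{i=1}^C x_i, of amb(q)·D_α(q) equals this value, where D_α(q) = (Γ(α_0)/(Γ(α_cs)∏_{k=1}^C Γ(α_k))) · q_cs^{α_cs−1} ∏_{k=1}^C q_k^{α_k−1}. -/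

import Mathlib

open Finset MeasureTheory

/-- The ambiguity measure of a probability vector `(q₁, …, q_C, q_cs)`:
`1` if `q_cs = 1`, and `1 - (1/(1-q_cs)) ∑ q_k²` otherwise. -/
noncomputable def amb (C : ℕ) (q : Fin C → ℝ) (qcs : ℝ) : ℝ :=
  if qcs = 1 then 1 else 1 - (1 / (1 - qcs)) * ∑ k, (q k) ^ 2

/-- The Dirichlet density `D_α(q)` on the parameterized simplex
`{x ∈ ℝ^C : x_i > 0, ∑ x_i < 1}` (with `q_k = x_k` and `q_cs = 1 - ∑ x_i`),
for proper-category parameters `α` and can't-solve parameter `αcs`. -/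
noncomputable def dirichletDensity (C : ℕ) (α : Fin C → ℝ) (αcs : ℝ)
    (x : Fin C → ℝ) : ℝ :=
  (Real.Gamma (αcs + ∑ k, α k) / (Real.Gamma αcs * ∏ k, Real.Gamma (α k))) *
    (1 - ∑ i, x i) ^ (αcs - 1) * ∏ k, (x k) ^ (α k - 1)

/-!
On the simplex `amb(q) · D_α(q) = D_α(q) - ∑ₖ q_k² / (1 - q_cs) · D_α(q)`, and up to the
normalizing constant, `q_k² / (1 - q_cs) · D_α(q)` is `(∑ x_i)⁻¹` times the Dirichlet kernel
with `α_k` raised by `2`. Both kinds of integrals have the form `∫ f(∑ x_i) ∏ x_i ^ (a_i - 1) dx`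
over the positive orthant, which Liouville's formula
  `∫ f(∑ x_i) ∏ x_i ^ (a_i - 1) dx = (∏ Γ(a_i) / Γ(∑ a_i)) ∫₀^∞ f(t) t ^ (∑ a_i - 1) dt`
turns into beta integrals: `E[1] = 1` and
  `E[q_k² / (1 - q_cs)] = α_k (α_k + 1) / (α₀ (α₀ - α_cs + 1))`.
Liouville's formula follows by induction on the dimension from its two-variable case, which is
the substitution `u = s + t` followed by a beta integral in `s`.
-/

open Real Set ProbabilityTheory
open scoped ENNReal

theorem beta_add_one_left {a b : ℝ} (ha : 0 < a) (hb : 0 < b) :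
    beta (a + 1) b = a / (a + b) * beta a b := by
  have := (Gamma_pos_of_pos (add_pos ha hb)).ne'
  rw [beta, beta, add_right_comm, Gamma_add_one ha.ne', Gamma_add_one (add_pos ha hb).ne']
  field_simp

theorem lintegral_Ioo_rpow_mul_one_sub_rpow {a b : ℝ} (ha : 0 < a) (hb : 0 < b) :
    ∫⁻ x in Ioo 0 1, ENNReal.ofReal (x ^ (a - 1) * (1 - x) ^ (b - 1)) =
      ENNReal.ofReal (beta a b) := by
  have h := lintegral_betaPDF_eq_one ha hb
  simp_rw [lintegral_betaPDF, mul_assoc,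
    ENNReal.ofReal_mul (one_div_nonneg.2 (beta_pos ha hb).le)] at h
  rw [lintegral_const_mul' _ _ ENNReal.ofReal_ne_top, mul_comm] at h
  rw [ENNReal.eq_inv_of_mul_eq_one_left h, one_div, ENNReal.ofReal_inv_of_pos (beta_pos ha hb),
    inv_inv]

theorem lintegral_Ioo_rpow_mul_sub_rpow {a b u : ℝ} (ha : 0 < a) (hb : 0 < b) (hu : 0 < u) :
    ∫⁻ s in Ioo 0 u, ENNReal.ofReal (s ^ (a - 1) * (u - s) ^ (b - 1)) =
      ENNReal.ofReal (u ^ (a + b - 1) * beta a b) := by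
  have himage : (u * ·) '' Ioo 0 1 = Ioo 0 u := by
    rw [image_mul_left_Ioo hu, mul_zero, mul_one]
  rw [← himage, lintegral_image_eq_lintegral_abs_deriv_mul measurableSet_Ioo
      (fun x _ => by simpa using ((hasDerivAt_id x).const_mul u).hasDerivWithinAt)
      (mul_right_injective₀ hu.ne').injOn,
    ENNReal.ofReal_mul (rpow_nonneg hu.le _), ← lintegral_Ioo_rpow_mul_one_sub_rpow ha hb,
    ← lintegral_const_mul' _ _ ENNReal.ofReal_ne_top]
  refine setLIntegral_congr_fun measurableSet_Ioo fun v ⟨hv0, hv1⟩ => ?_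
  rw [abs_of_pos hu, ← ENNReal.ofReal_mul hu.le, ← ENNReal.ofReal_mul (rpow_nonneg hu.le _)]
  congr 1
  rw [show u - u * v = u * (1 - v) by ring, mul_rpow hu.le hv0.le,
    mul_rpow hu.le (by linarith), show a + b - 1 = 1 + (a - 1) + (b - 1) by ring,
    rpow_add hu, rpow_add hu, rpow_one]
  ring

theorem setLIntegral_Ioi_comp_const_add (g : ℝ → ℝ≥0∞) (s : ℝ) :
    ∫⁻ t in Ioi 0, g (s + t) = ∫⁻ u in Ioi s, g u := by
  have himage : (s + ·) '' Ioi 0 = Ioi s := by rw [image_const_add_Ioi, add_zero]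
  rw [← himage, lintegral_image_eq_lintegral_abs_deriv_mul measurableSet_Ioi
      (fun x _ => by simpa using ((hasDerivAt_id x).const_add s).hasDerivWithinAt)
      (add_right_injective s).injOn]
  simp

theorem lintegral_Ioi_rpow_mul_lintegral_Ioi_comp_add {a b : ℝ} (ha : 0 < a) (hb : 0 < b)
    {f : ℝ → ℝ≥0∞} (hf : Measurable f) :
    ∫⁻ s in Ioi 0, ENNReal.ofReal (s ^ (a - 1)) *
        ∫⁻ t in Ioi 0, f (s + t) * ENNReal.ofReal (t ^ (b - 1)) =
      ENNReal.ofReal (beta a b) * ∫⁻ u in Ioi 0, f u * ENNReal.ofReal (u ^ (a + b - 1)) := by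
  set G : ℝ → ℝ → ℝ≥0∞ := fun s u =>
    if s < u then ENNReal.ofReal (s ^ (a - 1)) * (f u * ENNReal.ofReal ((u - s) ^ (b - 1)))
    else 0
  have hG : Measurable (Function.uncurry G) :=
    Measurable.ite (measurableSet_lt measurable_fst measurable_snd) (by fun_prop)
      measurable_const
  have h_shift : ∀ s ∈ Ioi (0 : ℝ), ENNReal.ofReal (s ^ (a - 1)) *
      ∫⁻ t in Ioi 0, f (s + t) * ENNReal.ofReal (t ^ (b - 1)) = ∫⁻ u in Ioi 0, G s u := by
    intro s (hs : 0 < s)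
    have h := setLIntegral_Ioi_comp_const_add
      (fun u => f u * ENNReal.ofReal ((u - s) ^ (b - 1))) s
    simp only [add_sub_cancel_left] at h
    have hG_s : G s = (Ioi s).indicator
        (fun u => ENNReal.ofReal (s ^ (a - 1)) * (f u * ENNReal.ofReal ((u - s) ^ (b - 1)))) := by
      ext u; simp only [G, indicator_apply, Set.mem_Ioi]
    rw [h, hG_s, lintegral_indicator measurableSet_Ioi,
      Measure.restrict_restrict measurableSet_Ioi, Set.inter_eq_left.2 (Set.Ioi_subset_Ioi hs.le),
      lintegral_const_mul' _ _ ENNReal.ofReal_ne_top]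
  have h_beta : ∀ u ∈ Ioi (0 : ℝ), ∫⁻ s in Ioi 0, G s u =
      ENNReal.ofReal (beta a b) * (f u * ENNReal.ofReal (u ^ (a + b - 1))) := by
    intro u (hu : 0 < u)
    calc ∫⁻ s in Ioi 0, G s u
        = ∫⁻ s in Ioi 0, (Iio u).indicator
            (fun s => f u * ENNReal.ofReal (s ^ (a - 1) * (u - s) ^ (b - 1))) s := by
          refine setLIntegral_congr_fun measurableSet_Ioi fun s (hs : 0 < s) => ?_
          simp only [G, indicator_apply, Set.mem_Iio, ENNReal.ofReal_mul (rpow_nonneg hs.le _)]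
          split_ifs <;> ring
      _ = f u * ENNReal.ofReal (u ^ (a + b - 1) * beta a b) := by
          rw [lintegral_indicator measurableSet_Iio, Measure.restrict_restrict measurableSet_Iio,
            Iio_inter_Ioi, lintegral_const_mul _ (by fun_prop),
            lintegral_Ioo_rpow_mul_sub_rpow ha hb hu]
      _ = _ := by
          rw [ENNReal.ofReal_mul (rpow_nonneg hu.le _)]
          ring
  calc _ = ∫⁻ s in Ioi 0, ∫⁻ u in Ioi 0, G s u :=
        setLIntegral_congr_fun measurableSet_Ioi h_shift
    _ = ∫⁻ u in Ioi 0, ∫⁻ s in Ioi 0, G s u := lintegral_lintegral_swap hG.aemeasurable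
    _ = _ := by
      rw [setLIntegral_congr_fun measurableSet_Ioi h_beta,
        lintegral_const_mul' _ _ ENNReal.ofReal_ne_top]

theorem lintegral_pi_eq_lintegral_lintegral_cons {α : Type*} [MeasurableSpace α]
    (μ : Measure α) [SigmaFinite μ] {n : ℕ} {F : (Fin (n + 1) → α) → ℝ≥0∞}
    (hF : Measurable F) :
    ∫⁻ x, F x ∂(Measure.pi fun _ => μ) =
      ∫⁻ t, ∫⁻ y, F (Fin.cons t y) ∂(Measure.pi fun _ => μ) ∂μ := by
  rw [← ((measurePreserving_piFinSuccAbove (fun _ => μ) 0).symm).lintegral_comp_emb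
      (MeasurableEquiv.measurableEmbedding _),
    lintegral_prod _ (by fun_prop)]
  simp [MeasurableEquiv.piFinSuccAbove_symm_apply, Fin.insertNthEquiv]

theorem lintegral_pi_Ioi_comp_sum_mul_prod_rpow {n : ℕ} (a : Fin (n + 1) → ℝ)
    (ha : ∀ i, 0 < a i) {f : ℝ → ℝ≥0∞} (hf : Measurable f) :
    ∫⁻ x, f (∑ i, x i) * ∏ i, ENNReal.ofReal (x i ^ (a i - 1))
        ∂(Measure.pi fun _ => volume.restrict (Ioi 0)) =
      ENNReal.ofReal ((∏ i, Gamma (a i)) / Gamma (∑ i, a i)) *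
        ∫⁻ t in Ioi 0, f t * ENNReal.ofReal (t ^ (∑ i, a i - 1)) := by
  induction n generalizing f with
  | zero =>
    simp only [Fin.sum_univ_succ, Fin.sum_univ_zero, add_zero, Fin.prod_univ_succ,
      Fin.prod_univ_zero, mul_one, div_self (Gamma_pos_of_pos (ha 0)).ne',
      ENNReal.ofReal_one, one_mul]
    exact (measurePreserving_funUnique (volume.restrict (Ioi (0 : ℝ))) (Fin 1)).lintegral_comp
      (by fun_prop : Measurable fun t => f t * ENNReal.ofReal (t ^ (a 0 - 1)))
  | succ n ih =>
    set a' : Fin (n + 1) → ℝ := fun j => a j.succ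
    have hA' : 0 < ∑ j, a' j := sum_pos (fun j _ => ha j.succ) univ_nonempty
    have h_inner : ∀ t, ∫⁻ y, f (∑ i, (Fin.cons t y : Fin (n + 2) → ℝ) i) *
          ∏ i, ENNReal.ofReal ((Fin.cons t y : Fin (n + 2) → ℝ) i ^ (a i - 1))
          ∂(Measure.pi fun _ => volume.restrict (Ioi 0)) =
        ENNReal.ofReal ((∏ j, Gamma (a' j)) / Gamma (∑ j, a' j)) *
          (ENNReal.ofReal (t ^ (a 0 - 1)) *
            ∫⁻ u in Ioi 0, f (t + u) * ENNReal.ofReal (u ^ (∑ j, a' j - 1))) := by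
      intro t
      rw [mul_left_comm, ← ih a' (fun j => ha j.succ) (f := fun u => f (t + u)) (by fun_prop),
        ← lintegral_const_mul' _ _ ENNReal.ofReal_ne_top]
      simp only [Fin.sum_cons, Fin.prod_univ_succ, Fin.cons_zero, Fin.cons_succ, a']
      congr 1 with y
      ring
    rw [lintegral_pi_eq_lintegral_lintegral_cons _ (by fun_prop), lintegral_congr h_inner,
      lintegral_const_mul' _ _ ENNReal.ofReal_ne_top,
      lintegral_Ioi_rpow_mul_lintegral_Ioi_comp_add (ha 0) hA' hf, ← mul_assoc,
      ← ENNReal.ofReal_mul (div_nonneg (prod_nonneg fun j _ => (Gamma_pos_of_pos (ha _)).le)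
        (Gamma_pos_of_pos hA').le), Fin.sum_univ_succ a, Fin.prod_univ_succ fun i => Gamma (a i)]
    congr 2
    simp only [a'] at hA' ⊢
    have := (Gamma_pos_of_pos hA').ne'
    have := (Gamma_pos_of_pos (add_pos (ha 0) hA')).ne'
    rw [beta]
    field_simp

theorem lintegral_Ioi_indicator_Iio_one_mul_rpow {a β r : ℝ} (hβ : 0 < β) (har : 0 < a + r) :
    ∫⁻ t in Ioi 0,
        (Set.Iio 1).indicator (fun t => ENNReal.ofReal (t ^ r * (1 - t) ^ (β - 1))) t *
          ENNReal.ofReal (t ^ (a - 1)) =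
      ENNReal.ofReal (beta (a + r) β) := by
  rw [← lintegral_Ioo_rpow_mul_one_sub_rpow har hβ, ← Iio_inter_Ioi,
    ← Measure.restrict_restrict measurableSet_Iio, ← lintegral_indicator measurableSet_Iio]
  refine setLIntegral_congr_fun measurableSet_Ioi fun t (ht : 0 < t) => ?_
  simp only [indicator_apply, Set.mem_Iio]
  split_ifs with ht1
  · rw [← ENNReal.ofReal_mul (mul_nonneg (rpow_nonneg ht.le _) (rpow_nonneg (by linarith) _)),
      show a + r - 1 = r + (a - 1) by ring, rpow_add ht]
    ring_nf
  · rw [zero_mul]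

theorem lintegral_simplex_rpow_sum_mul_prod_rpow {n : ℕ} (α : Fin (n + 1) → ℝ)
    (hα : ∀ i, 0 < α i) {β : ℝ} (hβ : 0 < β) {r : ℝ} (hr : 0 < ∑ i, α i + r) :
    ∫⁻ x in {x : Fin (n + 1) → ℝ | (∀ i, 0 < x i) ∧ ∑ i, x i < 1},
        ENNReal.ofReal
          ((∑ i, x i) ^ r * ((1 - ∑ i, x i) ^ (β - 1) * ∏ i, x i ^ (α i - 1))) =
      ENNReal.ofReal ((∏ i, Gamma (α i)) / Gamma (∑ i, α i) * beta (∑ i, α i + r) β) := by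
  set f : ℝ → ℝ≥0∞ :=
    (Set.Iio 1).indicator fun t => ENNReal.ofReal (t ^ r * (1 - t) ^ (β - 1))
  have hS : {x : Fin (n + 1) → ℝ | (∀ i, 0 < x i) ∧ ∑ i, x i < 1} =
      {x | ∑ i, x i < 1} ∩ univ.pi fun _ => Ioi 0 := by
    ext x; simp [and_comm]
  have hsum_meas : MeasurableSet {x : Fin (n + 1) → ℝ | ∑ i, x i < 1} :=
    measurableSet_lt (by fun_prop) measurable_const
  have hK : 0 ≤ (∏ i, Gamma (α i)) / Gamma (∑ i, α i) :=
    div_nonneg (prod_nonneg fun i _ => (Gamma_pos_of_pos (hα i)).le)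
      (Gamma_pos_of_pos (sum_pos (fun i _ => hα i) univ_nonempty)).le
  calc _ = ∫⁻ x in univ.pi fun _ => Ioi 0,
          f (∑ i, x i) * ∏ i, ENNReal.ofReal (x i ^ (α i - 1)) := by
        rw [hS, ← Measure.restrict_restrict hsum_meas, ← lintegral_indicator hsum_meas]
        refine setLIntegral_congr_fun (MeasurableSet.univ_pi fun _ => measurableSet_Ioi)
          fun x hx => ?_
        have hx : ∀ i, 0 < x i := by simpa using hx
        have hs : 0 ≤ ∑ i, x i := sum_nonneg fun i _ => (hx i).le
        simp only [f, indicator_apply, Set.mem_ofPred_eq, Set.mem_Iio]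
        split_ifs with hs1
        · rw [← ENNReal.ofReal_prod_of_nonneg fun i _ => rpow_nonneg (hx i).le _,
            ← ENNReal.ofReal_mul (mul_nonneg (rpow_nonneg hs _)
              (rpow_nonneg (by linarith : 0 ≤ 1 - ∑ i, x i) _)), mul_assoc]
        · rw [zero_mul]
    _ = ENNReal.ofReal ((∏ i, Gamma (α i)) / Gamma (∑ i, α i)) *
          ENNReal.ofReal (beta (∑ i, α i + r) β) := by
        rw [volume_pi, Measure.restrict_pi_pi, lintegral_pi_Ioi_comp_sum_mul_prod_rpow α hα
          (Measurable.indicator (by fun_prop) measurableSet_Iio),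
          lintegral_Ioi_indicator_Iio_one_mul_rpow hβ hr]
    _ = _ := (ENNReal.ofReal_mul hK).symm

theorem measurableSet_simplex (n : ℕ) :
    MeasurableSet {x : Fin n → ℝ | (∀ i, 0 < x i) ∧ ∑ i, x i < 1} := by
  simp only [Set.ofPred_and, Set.ofPred_forall]
  exact (MeasurableSet.iInter fun i =>
    measurableSet_lt measurable_const (measurable_pi_apply i)).inter
      (measurableSet_lt (by fun_prop) measurable_const)

theorem integrableOn_and_setIntegral_eq_of_setLIntegral_ofReal_eq {Ω : Type*}
    [MeasurableSpace Ω] {μ : Measure Ω} {s : Set Ω} (hs : MeasurableSet s) {f : Ω → ℝ}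
    (hf : AEStronglyMeasurable f (μ.restrict s)) (hf0 : ∀ x ∈ s, 0 ≤ f x) {c : ℝ}
    (hc : 0 ≤ c)
    (h : ∫⁻ x in s, ENNReal.ofReal (f x) ∂μ = ENNReal.ofReal c) :
    IntegrableOn f s μ ∧ ∫ x in s, f x ∂μ = c := by
  have hf0' : 0 ≤ᵐ[μ.restrict s] f := ae_restrict_of_forall_mem hs hf0
  refine ⟨⟨hf, (hasFiniteIntegral_iff_ofReal hf0').2 (h ▸ ENNReal.ofReal_lt_top)⟩, ?_⟩
  rw [integral_eq_lintegral_of_nonneg_ae hf0' hf, h, ENNReal.toReal_ofReal hc]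

theorem integrableOn_and_setIntegral_simplex_rpow_sum_mul_prod_rpow {n : ℕ}
    (α : Fin (n + 1) → ℝ) (hα : ∀ i, 0 < α i) {β : ℝ} (hβ : 0 < β) {r : ℝ}
    (hr : 0 < ∑ i, α i + r) :
    IntegrableOn
        (fun x => (∑ i, x i) ^ r * ((1 - ∑ i, x i) ^ (β - 1) * ∏ i, x i ^ (α i - 1)))
        {x : Fin (n + 1) → ℝ | (∀ i, 0 < x i) ∧ ∑ i, x i < 1} ∧
      ∫ x in {x : Fin (n + 1) → ℝ | (∀ i, 0 < x i) ∧ ∑ i, x i < 1},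
          (∑ i, x i) ^ r * ((1 - ∑ i, x i) ^ (β - 1) * ∏ i, x i ^ (α i - 1)) =
        (∏ i, Gamma (α i)) / Gamma (∑ i, α i) * beta (∑ i, α i + r) β := by
  have hK : 0 ≤ (∏ i, Gamma (α i)) / Gamma (∑ i, α i) :=
    div_nonneg (prod_nonneg fun i _ => (Gamma_pos_of_pos (hα i)).le)
      (Gamma_pos_of_pos (sum_pos (fun i _ => hα i) univ_nonempty)).le
  refine integrableOn_and_setIntegral_eq_of_setLIntegral_ofReal_eq (measurableSet_simplex _)
    (by fun_prop) (fun x ⟨hx, hx1⟩ => ?_) (mul_nonneg hK (beta_pos hr hβ).le)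
    (lintegral_simplex_rpow_sum_mul_prod_rpow α hα hβ hr)
  exact mul_nonneg (rpow_nonneg (sum_nonneg fun i _ => (hx i).le) _)
    (mul_nonneg (rpow_nonneg (by linarith) _) (prod_nonneg fun i _ => rpow_nonneg (hx i).le _))

section FunctionUpdate

variable {ι : Type*} [Fintype ι] [DecidableEq ι] (α : ι → ℝ) (k : ι)

theorem sum_update_add (r : ℝ) : ∑ i, Function.update α k (α k + r) i = ∑ i, α i + r := by
  rw [Fintype.sum_eq_add_sum_compl k, Fintype.sum_eq_add_sum_compl k α, Function.update_self,
    sum_congr rfl fun i hi => by rw [Function.update_of_ne (by simpa using hi)]]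
  ring

theorem prod_rpow_update_add {x : ι → ℝ} (hx : 0 < x k) (r : ℝ) :
    ∏ i, x i ^ (Function.update α k (α k + r) i - 1) = x k ^ r * ∏ i, x i ^ (α i - 1) := by
  rw [Fintype.prod_eq_mul_prod_compl k,
    Fintype.prod_eq_mul_prod_compl k (fun i => x i ^ (α i - 1)), Function.update_self,
    prod_congr rfl fun i hi => by rw [Function.update_of_ne (by simpa using hi)],
    show α k + r - 1 = r + (α k - 1) by ring, rpow_add hx]
  ring

theorem prod_Gamma_update_add_two (hk : 0 < α k) :
    ∏ i, Gamma (Function.update α k (α k + 2) i) = α k * (α k + 1) * ∏ i, Gamma (α i) := by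
  rw [Fintype.prod_eq_mul_prod_compl k, Fintype.prod_eq_mul_prod_compl k (fun i => Gamma (α i)),
    Function.update_self,
    prod_congr rfl fun i hi => by rw [Function.update_of_ne (by simpa using hi)],
    show α k + 2 = α k + 1 + 1 by ring, Gamma_add_one (by linarith), Gamma_add_one hk.ne']
  ring

end FunctionUpdate

theorem amb_one_sub_sum {C : ℕ} {x : Fin C → ℝ} (hx : ∑ i, x i ≠ 0) :
    amb C x (1 - ∑ i, x i) = 1 - ∑ k, x k ^ 2 / ∑ i, x i := by
  rw [amb, if_neg (by simpa using hx), sub_sub_cancel, ← sum_div, one_div, inv_mul_eq_div]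

section DirichletMoments

variable {n : ℕ} {α : Fin (n + 1) → ℝ} {β : ℝ}

theorem integrableOn_and_setIntegral_dirichletDensity (hα : ∀ i, 0 < α i) (hβ : 0 < β) :
    IntegrableOn (dirichletDensity (n + 1) α β)
        {x : Fin (n + 1) → ℝ | (∀ i, 0 < x i) ∧ ∑ i, x i < 1} ∧
      ∫ x in {x : Fin (n + 1) → ℝ | (∀ i, 0 < x i) ∧ ∑ i, x i < 1},
        dirichletDensity (n + 1) α β x = 1 := by
  have hA : 0 < ∑ i, α i := sum_pos (fun i _ => hα i) univ_nonempty
  obtain ⟨hint, hval⟩ := integrableOn_and_setIntegral_simplex_rpow_sum_mul_prod_rpow α hα hβ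
    (r := 0) (by simpa using hA)
  have hD : dirichletDensity (n + 1) α β = fun x =>
      Gamma (β + ∑ i, α i) / (Gamma β * ∏ i, Gamma (α i)) *
        ((∑ i, x i) ^ (0 : ℝ) * ((1 - ∑ i, x i) ^ (β - 1) * ∏ i, x i ^ (α i - 1))) := by
    ext x; rw [dirichletDensity, rpow_zero]; ring
  rw [hD]
  refine ⟨hint.const_mul _, ?_⟩
  have := (Gamma_pos_of_pos hβ).ne'
  have := (Gamma_pos_of_pos hA).ne'
  have := (prod_pos (s := univ) fun i _ => Gamma_pos_of_pos (hα i)).ne'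
  rw [integral_const_mul, hval, add_zero, beta, add_comm β]
  field_simp

theorem integrableOn_and_setIntegral_sq_div_sum_mul_dirichletDensity (hα : ∀ i, 0 < α i)
    (hβ : 0 < β) (k : Fin (n + 1)) :
    IntegrableOn (fun x => x k ^ 2 / (∑ i, x i) * dirichletDensity (n + 1) α β x)
        {x : Fin (n + 1) → ℝ | (∀ i, 0 < x i) ∧ ∑ i, x i < 1} ∧
      ∫ x in {x : Fin (n + 1) → ℝ | (∀ i, 0 < x i) ∧ ∑ i, x i < 1},
        x k ^ 2 / (∑ i, x i) * dirichletDensity (n + 1) α β x =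
          α k * (α k + 1) / ((β + ∑ i, α i) * (∑ i, α i + 1)) := by
  set A := ∑ i, α i
  have hA : 0 < A := sum_pos (fun i _ => hα i) univ_nonempty
  have hα' : ∀ i, 0 < Function.update α k (α k + 2) i := fun i => by
    rcases eq_or_ne i k with rfl | h
    · simp [(hα i).trans (lt_add_of_pos_right _ two_pos)]
    · simp [h, hα i]
  obtain ⟨hint, hval⟩ := integrableOn_and_setIntegral_simplex_rpow_sum_mul_prod_rpow _ hα' hβ
    (r := -1) (by rw [sum_update_add]; linarith)
  have hD : EqOn (fun x => Gamma (β + A) / (Gamma β * ∏ i, Gamma (α i)) *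
        ((∑ i, x i) ^ (-1 : ℝ) *
          ((1 - ∑ i, x i) ^ (β - 1) * ∏ i, x i ^ (Function.update α k (α k + 2) i - 1))))
      (fun x => x k ^ 2 / (∑ i, x i) * dirichletDensity (n + 1) α β x)
      {x : Fin (n + 1) → ℝ | (∀ i, 0 < x i) ∧ ∑ i, x i < 1} := fun x ⟨hx, _⟩ => by
    simp only [dirichletDensity, prod_rpow_update_add _ _ (hx k), rpow_neg_one, rpow_two]
    ring
  refine ⟨IntegrableOn.congr_fun (hint.const_mul _) hD (measurableSet_simplex _), ?_⟩
  have := (Gamma_pos_of_pos hβ).ne'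
  have := (Gamma_pos_of_pos hA).ne'
  have := (prod_pos (s := univ) fun i _ => Gamma_pos_of_pos (hα i)).ne'
  rw [← setIntegral_congr_fun (measurableSet_simplex _) hD, integral_const_mul, hval,
    sum_update_add, prod_Gamma_update_add_two _ _ (hα k), show A + 2 + -1 = A + 1 by ring,
    beta_add_one_left hA hβ, show A + 2 = A + 1 + 1 by ring, Gamma_add_one (by linarith),
    Gamma_add_one hA.ne', beta, add_comm β]
  field_simp

end DirichletMoments

/-- The Dirichlet expectation of the ambiguity equals
`1 - [α₀(α₀ - α_cs + 1)]⁻¹ ∑ α_k(α_k + 1)`. -/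
theorem dirichlet_expected_amb
    (C : ℕ) (hC : 1 ≤ C) (α : Fin C → ℝ) (αcs : ℝ)
    (hα : ∀ k, 0 < α k) (hαcs : 0 < αcs)
    (α₀ : ℝ) (hα₀ : α₀ = αcs + ∑ k, α k) :
    ∫ x in {x : Fin C → ℝ | (∀ i, 0 < x i) ∧ ∑ i, x i < 1},
        amb C x (1 - ∑ i, x i) * dirichletDensity C α αcs x
      = 1 - (α₀ * (α₀ - αcs + 1))⁻¹ * ∑ k, α k * (α k + 1) := by
  obtain ⟨n, rfl⟩ : ∃ n, C = n + 1 := ⟨C - 1, by omega⟩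
  have hmass := integrableOn_and_setIntegral_dirichletDensity hα hαcs
  have hsq := integrableOn_and_setIntegral_sq_div_sum_mul_dirichletDensity hα hαcs
  have hpt : EqOn (fun x => amb (n + 1) x (1 - ∑ i, x i) * dirichletDensity (n + 1) α αcs x)
      (fun x => dirichletDensity (n + 1) α αcs x -
        ∑ k, x k ^ 2 / (∑ i, x i) * dirichletDensity (n + 1) α αcs x)
      {x : Fin (n + 1) → ℝ | (∀ i, 0 < x i) ∧ ∑ i, x i < 1} := fun x ⟨hx, _⟩ => by
    dsimp only
    rw [amb_one_sub_sum (sum_pos (fun i _ => hx i) univ_nonempty).ne', sub_mul, one_mul, sum_mul]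
  rw [setIntegral_congr_fun (measurableSet_simplex _) hpt,
    integral_sub hmass.1 (integrable_finsetSum _ fun k _ => (hsq k).1),
    integral_finsetSum _ fun k _ => (hsq k).1, hmass.2, sum_congr rfl fun k _ => (hsq k).2,
    ← sum_div, hα₀, add_sub_cancel_left, div_eq_inv_mul]
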